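/- For every real κ with 1 < κ < 4, the boundary of the tangency disk is covered by the four disks d₁, d₂, d₋₁, d₋₂ of the standard pyramidal disk packing: every point p = (x, y) ∈ ℝ² with x² + (y − 2/κ)² = (κ²+4)/κ² satisfies at least one of the following: y ≥ 1, or ‖p − (0, 1/κ − 1)‖ ≤ 1/κ, or ‖p − (2/√κ, 0)‖ ≤ 1, or ‖p − (−2/√κ, 0)‖ ≤ 1. -/

import Mathlib

/-! Clearing denominators, the tangency circle is `κ (x² + y²) = κ + 4y`. On it, lying in `d₁`
becomes the linear condition `y (1 + κ) ≤ 1 - κ`, and lying in the unit disk centred at `(c, 0)`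
with `κ c² = 4` becomes `y + 1 ≤ κ c x / 2`, i.e. `y + 1 ≤ ±√κ x`. On the arc
`(1 - κ)/(1 + κ) < y < 1` left over by `d₋₁` and `d₁`, the identity
`κ x² - (y + 1)² = (1 - y) (y (1 + κ) - (1 - κ))` gives `y + 1 ≤ √κ |x|`, and the sign of `x`
decides between `d₂` and `d₋₂`. -/

noncomputable section

open Metric

/-- The half-plane `{(x,y) : y ≤ −1}`. -/
def dx : Set (EuclideanSpace ℝ (Fin 2)) := {p | p 1 ≤ -1}

/-- The half-plane `{(x,y) : y ≥ 1}`. -/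
def dm1 : Set (EuclideanSpace ℝ (Fin 2)) := {p | 1 ≤ p 1}

/-- The closed disk of radius `1/κ` centered at `(0, 1/κ − 1)`. -/
def d1 (κ : ℝ) : Set (EuclideanSpace ℝ (Fin 2)) :=
  closedBall (WithLp.toLp 2 ![0, 1 / κ - 1] : EuclideanSpace ℝ (Fin 2)) (1 / κ)

/-- The closed unit disk centered at `(2/√κ, 0)`. -/
def d2 (κ : ℝ) : Set (EuclideanSpace ℝ (Fin 2)) :=
  closedBall (WithLp.toLp 2 ![2 / Real.sqrt κ, 0] : EuclideanSpace ℝ (Fin 2)) 1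

/-- The closed unit disk centered at `(−2/√κ, 0)`. -/
def dm2 (κ : ℝ) : Set (EuclideanSpace ℝ (Fin 2)) :=
  closedBall (WithLp.toLp 2 ![-(2 / Real.sqrt κ), 0] : EuclideanSpace ℝ (Fin 2)) 1

lemma EuclideanSpace.mem_closedBall_fin_two_iff {c p : EuclideanSpace ℝ (Fin 2)} {r : ℝ}
    (hr : 0 ≤ r) : p ∈ closedBall c r ↔ (p 0 - c 0) ^ 2 + (p 1 - c 1) ^ 2 ≤ r ^ 2 := by
  rw [mem_closedBall, EuclideanSpace.dist_eq, Fin.sum_univ_two, Real.dist_eq, Real.dist_eq,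
    sq_abs, sq_abs, Real.sqrt_le_left hr]

lemma tangency_circle_iff {κ a b : ℝ} (hκ : κ ≠ 0) :
    a ^ 2 + (b - 2 / κ) ^ 2 = (κ ^ 2 + 4) / κ ^ 2 ↔ κ * (a ^ 2 + b ^ 2) = κ + 4 * b := by
  constructor <;> intro h <;> field_simp at h ⊢
  · exact mul_left_cancel₀ hκ (by linear_combination h)
  · linear_combination κ * h

lemma sq_add_one_le_of_arc {κ a b : ℝ} (hp : κ * (a ^ 2 + b ^ 2) = κ + 4 * b) (hb1 : b < 1)
    (hb : 1 - κ < b * (1 + κ)) : (b + 1) ^ 2 ≤ κ * a ^ 2 := by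
  have h := mul_pos (sub_pos.2 hb1) (sub_pos.2 hb)
  linear_combination (-1) * hp + h.le

section TangencyCircle

variable {κ : ℝ} {p : EuclideanSpace ℝ (Fin 2)}

lemma mem_d1_iff (hκ : 0 < κ) (hp : κ * (p 0 ^ 2 + p 1 ^ 2) = κ + 4 * p 1) :
    p ∈ d1 κ ↔ p 1 * (1 + κ) ≤ 1 - κ := by
  have key : (1 / κ) ^ 2 - ((p 0 - 0) ^ 2 + (p 1 - (1 / κ - 1)) ^ 2) =
      2 / κ * (1 - κ - p 1 * (1 + κ)) := by
    field_simp
    linear_combination (-κ) * hp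
  rw [d1, EuclideanSpace.mem_closedBall_fin_two_iff (by positivity)]
  simp only [Matrix.cons_val_zero, Matrix.cons_val_one]
  rw [← sub_nonneg, key, mul_nonneg_iff_of_pos_left (by positivity), sub_nonneg]

lemma mem_closedBall_iff_of_mul_sq_eq_four {c : ℝ} (hκ : 0 < κ) (hc : κ * c ^ 2 = 4)
    (hp : κ * (p 0 ^ 2 + p 1 ^ 2) = κ + 4 * p 1) :
    p ∈ closedBall (WithLp.toLp 2 ![c, 0] : EuclideanSpace ℝ (Fin 2)) 1 ↔
      p 1 + 1 ≤ κ * c * p 0 / 2 := by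
  have key : 1 ^ 2 - ((p 0 - c) ^ 2 + (p 1 - 0) ^ 2) =
      4 / κ * (κ * c * p 0 / 2 - (p 1 + 1)) := by
    field_simp
    linear_combination (-2) * hp - 2 * hc
  rw [EuclideanSpace.mem_closedBall_fin_two_iff zero_le_one]
  simp only [Matrix.cons_val_zero, Matrix.cons_val_one]
  rw [← sub_nonneg, key, mul_nonneg_iff_of_pos_left (by positivity), sub_nonneg]


lemma mem_closedBall_of_mul_sq_eq_four {c : ℝ} (hκ : 0 < κ) (hc : κ * c ^ 2 = 4)
    (hp : κ * (p 0 ^ 2 + p 1 ^ 2) = κ + 4 * p 1) (hb1 : p 1 < 1) (hb : 1 - κ < p 1 * (1 + κ))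
    (hca : 0 ≤ c * p 0) :
    p ∈ closedBall (WithLp.toLp 2 ![c, 0] : EuclideanSpace ℝ (Fin 2)) 1 := by
  have hb0 : 0 ≤ p 1 + 1 := by nlinarith
  rw [mem_closedBall_iff_of_mul_sq_eq_four hκ hc hp,
    ← pow_le_pow_iff_left₀ hb0 (by rw [mul_assoc]; positivity) two_ne_zero]
  calc (p 1 + 1) ^ 2 ≤ κ * p 0 ^ 2 := sq_add_one_le_of_arc hp hb1 hb
    _ = (κ * c * p 0 / 2) ^ 2 := by linear_combination (-κ * p 0 ^ 2 / 4) * hc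

end TangencyCircle

theorem tangency_circle_covered_general (κ : ℝ) (hκ1 : 1 < κ) :
    ∀ p : EuclideanSpace ℝ (Fin 2),
      (p 0) ^ 2 + (p 1 - 2 / κ) ^ 2 = (κ ^ 2 + 4) / κ ^ 2 →
      p ∈ dm1 ∨ p ∈ d1 κ ∨ p ∈ d2 κ ∨ p ∈ dm2 κ := by
  intro p hp
  have hκ : 0 < κ := by linarith
  rw [tangency_circle_iff hκ.ne'] at hp
  rcases le_or_gt 1 (p 1) with hb1 | hb1
  · exact Or.inl hb1
  rcases le_or_gt (p 1 * (1 + κ)) (1 - κ) with hb | hb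
  · exact Or.inr (Or.inl ((mem_d1_iff hκ hp).2 hb))
  have hc : κ * (2 / √κ) ^ 2 = 4 := by
    rw [div_pow, Real.sq_sqrt hκ.le, mul_div_cancel₀ _ hκ.ne']
    norm_num
  have hc' : κ * (-(2 / √κ)) ^ 2 = 4 := by rwa [neg_sq]
  rcases le_total 0 (p 0) with ha | ha
  · exact Or.inr (Or.inr (Or.inl
      (mem_closedBall_of_mul_sq_eq_four hκ hc hp hb1 hb (by positivity))))
  · refine Or.inr (Or.inr (Or.inr (mem_closedBall_of_mul_sq_eq_four hκ hc' hp hb1 hb ?_)))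
    exact mul_nonneg_of_nonpos_of_nonpos (neg_nonpos.2 (by positivity)) ha

/-- For `1 < κ < 4`, the boundary circle of the tangency disk is covered by the
four disks `d₁, d₂, d₋₁, d₋₂` of the standard pyramidal disk packing. -/
theorem tangency_circle_covered (κ : ℝ) (hκ1 : 1 < κ) (hκ4 : κ < 4) :
    ∀ p : EuclideanSpace ℝ (Fin 2),
      (p 0) ^ 2 + (p 1 - 2 / κ) ^ 2 = (κ ^ 2 + 4) / κ ^ 2 →
      p ∈ dm1 ∨ p ∈ d1 κ ∨ p ∈ d2 κ ∨ p ∈ dm2 κ :=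
  tangency_circle_covered_general κ hκ1
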